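/- Dirichlet form comparison on two sites: let Λ = {0,1}, γ(n) := ν_Λ^N[η₀=n], 𝒟̃(φ,φ) := ∑_{n=1}^N γ(n) c(n) (φ(n−1)−φ(n))² and 𝒟(φ,φ) := ∑_{n=1}^N min(γ(n),γ(n−1)) (φ(n−1)−φ(n))². If A₀⁻¹k ≤ c(k) ≤ A₀k for k ≥ 1, then there is B₀ > 0 (depending only on A₀) such that N·𝒟(φ,φ) ≤ B₀·𝒟̃(φ,φ) for all φ : {0,…,N} → ℝ and all N ≥ 1. -/

import Mathlib

open Finset

/-- `cfact c n = c(1)⋯c(n)`, with `cfact c 0 = 1`. -/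
noncomputable def cfact (c : ℕ → ℝ) (n : ℕ) : ℝ := ∏ k ∈ Finset.range n, c (k + 1)

/-- `γ(n) = ν_{{0,1}}^N[η₀ = n]` for the two-site canonical zero-range measure. -/
noncomputable def gammaTwo (c : ℕ → ℝ) (N n : ℕ) : ℝ :=
  ((cfact c n)⁻¹ * (cfact c (N - n))⁻¹) /
    (∑ k ∈ Finset.range (N + 1), (cfact c k)⁻¹ * (cfact c (N - k))⁻¹)

/- In the two-site canonical measure the weights satisfy detailed balance
`γ(m+1) c(m+1) = γ(m) c(N-m)`, so `γ(n) c(n)` dominates both `c(n) · min(γ(n), γ(n-1))` and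
`c(N-n+1) · min(γ(n), γ(n-1))`. Since `n + (N-n+1) = N+1`, one of the two rates is at least
`N / (2A₀)` by the linear lower bound on `c`, and the comparison holds bond by bond with
`B₀ = 2A₀`. -/

lemma cfact_succ (c : ℕ → ℝ) (n : ℕ) : cfact c (n + 1) = cfact c n * c (n + 1) :=
  prod_range_succ _ _

section TwoSite

variable {c : ℕ → ℝ}

lemma cfact_pos (hc : ∀ k, 0 < k → 0 < c k) (n : ℕ) : 0 < cfact c n :=
  prod_pos fun k _ => hc _ k.succ_pos

lemma gammaTwo_nonneg (hc : ∀ k, 0 < k → 0 < c k) (N n : ℕ) : 0 ≤ gammaTwo c N n := by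
  have h k : 0 ≤ (cfact c k)⁻¹ := inv_nonneg.mpr (cfact_pos hc k).le
  exact div_nonneg (mul_nonneg (h _) (h _)) (sum_nonneg fun k _ => mul_nonneg (h _) (h _))

lemma gammaTwo_succ_mul (hc : ∀ k, 0 < k → 0 < c k) {N m : ℕ} (hm : m < N) :
    gammaTwo c N (m + 1) * c (m + 1) = gammaTwo c N m * c (N - m) := by
  obtain ⟨k, rfl⟩ : ∃ k, N = m + 1 + k := ⟨N - (m + 1), by omega⟩
  have hk : m + 1 + k - m = k + 1 := by omega
  have hm1 := hc (m + 1) m.succ_pos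
  have hk1 := hc (k + 1) k.succ_pos
  unfold gammaTwo
  rw [hk, Nat.add_sub_cancel_left, cfact_succ c m, cfact_succ c k]
  field_simp

end TwoSite

lemma mul_min_le_of_balance {x y p q K M : ℝ} (hx : 0 ≤ x) (hy : 0 ≤ y) (hp : 0 ≤ p)
    (hq : 0 ≤ q) (hK : 0 ≤ K) (hbal : x * p = y * q) (hM : M ≤ K * max p q) :
    M * min x y ≤ K * (x * p) := by
  have hmin : 0 ≤ min x y := le_min hx hy
  rcases max_cases p q with ⟨hmax, -⟩ | ⟨hmax, -⟩ <;> rw [hmax] at hM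
  · calc M * min x y ≤ K * p * min x y := mul_le_mul_of_nonneg_right hM hmin
      _ ≤ K * p * x := mul_le_mul_of_nonneg_left (min_le_left x y) (by positivity)
      _ = K * (x * p) := by ring
  · calc M * min x y ≤ K * q * min x y := mul_le_mul_of_nonneg_right hM hmin
      _ ≤ K * q * y := mul_le_mul_of_nonneg_left (min_le_right x y) (by positivity)
      _ = K * (x * p) := by rw [hbal]; ring

lemma add_le_two_mul_max_of_linear_lower_bound {c : ℕ → ℝ} {A : ℝ} (hA : 0 < A)
    (hlow : ∀ k : ℕ, 1 ≤ k → A⁻¹ * k ≤ c k) {i j : ℕ} (hi : 1 ≤ i) (hj : 1 ≤ j) :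
    (i + j : ℝ) ≤ 2 * A * max (c i) (c j) := by
  have hci : (i : ℝ) ≤ A * c i := (inv_mul_le_iff₀ hA).mp (hlow i hi)
  have hcj : (j : ℝ) ≤ A * c j := (inv_mul_le_iff₀ hA).mp (hlow j hj)
  have := mul_le_mul_of_nonneg_left (le_max_left (c i) (c j)) hA.le
  have := mul_le_mul_of_nonneg_left (le_max_right (c i) (c j)) hA.le
  linarith

theorem dirichlet_form_comparison_general (c : ℕ → ℝ)
    (hcpos : ∀ k, 0 < k → 0 < c k)
    (A₀ : ℝ) (hA₀ : 1 ≤ A₀)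
    (hgrow : ∀ k : ℕ, 1 ≤ k → A₀⁻¹ * k ≤ c k ∧ c k ≤ A₀ * k) :
    ∃ B₀ : ℝ, 0 < B₀ ∧ ∀ N : ℕ, 1 ≤ N → ∀ φ : ℕ → ℝ,
      (N : ℝ) * ∑ n ∈ Finset.Icc 1 N,
          min (gammaTwo c N n) (gammaTwo c N (n - 1)) * (φ (n - 1) - φ n) ^ 2 ≤
        B₀ * ∑ n ∈ Finset.Icc 1 N,
          gammaTwo c N n * c n * (φ (n - 1) - φ n) ^ 2 := by
  have hA : 0 < A₀ := by linarith
  refine ⟨2 * A₀, by positivity, fun N _ φ => ?_⟩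
  rw [mul_sum, mul_sum]
  refine sum_le_sum fun n hn => ?_
  obtain ⟨m, rfl, hm⟩ : ∃ m, n = m + 1 ∧ m < N := ⟨n - 1, by grind⟩
  rw [Nat.add_sub_cancel]
  have hrate : (N : ℝ) ≤ 2 * A₀ * max (c (m + 1)) (c (N - m)) := by
    have := add_le_two_mul_max_of_linear_lower_bound hA (fun k hk => (hgrow k hk).1)
      (i := m + 1) (j := N - m) (by omega) (by omega)
    push_cast [Nat.cast_sub hm.le] at this
    linarith
  have hbond := mul_min_le_of_balance (gammaTwo_nonneg hcpos N (m + 1))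
    (gammaTwo_nonneg hcpos N m) (hcpos _ m.succ_pos).le (hcpos _ (by omega)).le
    (by positivity) (gammaTwo_succ_mul hcpos hm) hrate
  calc (N : ℝ) * (min (gammaTwo c N (m + 1)) (gammaTwo c N m) * (φ m - φ (m + 1)) ^ 2)
      = N * min (gammaTwo c N (m + 1)) (gammaTwo c N m) * (φ m - φ (m + 1)) ^ 2 := by ring
    _ ≤ 2 * A₀ * (gammaTwo c N (m + 1) * c (m + 1)) * (φ m - φ (m + 1)) ^ 2 :=
      mul_le_mul_of_nonneg_right hbond (sq_nonneg _)
    _ = 2 * A₀ * (gammaTwo c N (m + 1) * c (m + 1) * (φ m - φ (m + 1)) ^ 2) := by ring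

/-- Dirichlet form comparison on two sites: `N·𝒟(φ,φ) ≤ B₀·𝒟̃(φ,φ)`. -/
theorem dirichlet_form_comparison (c : ℕ → ℝ) (hc0 : c 0 = 0)
    (hcpos : ∀ k, 0 < k → 0 < c k)
    (A₀ : ℝ) (hA₀ : 1 ≤ A₀)
    (hgrow : ∀ k : ℕ, 1 ≤ k → A₀⁻¹ * k ≤ c k ∧ c k ≤ A₀ * k) :
    ∃ B₀ : ℝ, 0 < B₀ ∧ ∀ N : ℕ, 1 ≤ N → ∀ φ : ℕ → ℝ,
      (N : ℝ) * ∑ n ∈ Finset.Icc 1 N,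
          min (gammaTwo c N n) (gammaTwo c N (n - 1)) * (φ (n - 1) - φ n) ^ 2 ≤
        B₀ * ∑ n ∈ Finset.Icc 1 N,
          gammaTwo c N n * c n * (φ (n - 1) - φ n) ^ 2 :=
  dirichlet_form_comparison_general c hcpos A₀ hA₀ hgrow
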